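/- arXiv:2401.13263 — 3 statements merged into one kernel-verified Lean document; each statement's English description precedes it below -/
import Mathlib

section
/- Let n ≥ 2 and n < p < ∞, and let Ω ⊂ ℝⁿ be a bounded domain which is a local Sobolev–Poincaré imbedding domain of order p, i.e. there exist constants C ≥ 1 and λ ≥ 1 such that for every locally Lipschitz function u : Ω → ℝ, every x ∈ Ω, every 0 < r < diam(Ω) and all x₁, x₂ ∈ B(x,r) ∩ Ω, |u(x₁) − u(x₂)| ≤ C |x₁ − x₂|^{1 − n/p} (∫_{B(x,λr)∩Ω} |∇u(y)|^p dy)^{1/p}. Then the global Morrey inequality holds on Ω: there exists a constant C' such that for every locally Lipschitz function u : Ω → ℝ and all x₁, x₂ ∈ Ω, |u(x₁) − u(x₂)| ≤ C' |x₁ − x₂|^{1 − n/p} (∫_Ω |∇u(y)|^p dy)^{1/p}. -/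
open Set Metric MeasureTheory ENNReal NNReal

noncomputable section

/-- Euclidean space `ℝⁿ`. -/
abbrev Euc (n : ℕ) : Type := EuclideanSpace ℝ (Fin n)

/-- `u` is locally Lipschitz on the set `Ω`. -/
def LocallyLipschitzOnSet {n : ℕ} (u : Euc n → ℝ) (Ω : Set (Euc n)) : Prop :=
  ∀ x ∈ Ω, ∃ K : ℝ≥0, ∃ s ∈ nhdsWithin x Ω, LipschitzOnWith K u s

/-- `x` and `y` are joined by a (continuous) curve lying in `S`. -/
def JoinedByCurveIn {n : ℕ} (S : Set (Euc n)) (x y : Euc n) : Prop :=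
  ∃ γ : ℝ → Euc n, ContinuousOn γ (Icc 0 1) ∧ γ 0 = x ∧ γ 1 = y ∧ MapsTo γ (Icc 0 1) S

/-- `γ` is parametrized by arclength on `[0, L]`. -/
def ArclengthOn {n : ℕ} (γ : ℝ → Euc n) (L : ℝ) : Prop :=
  ∀ s t : ℝ, 0 ≤ s → s ≤ t → t ≤ L → eVariationOn γ (Icc s t) = ENNReal.ofReal (t - s)

/-- `Ω` is an `ε₀`-uniform domain. -/
def IsUniformWith {n : ℕ} (Ω : Set (Euc n)) (ε₀ : ℝ) : Prop :=
  ∀ x ∈ Ω, ∀ y ∈ Ω, ∃ γ : ℝ → Euc n,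
    ContinuousOn γ (Icc 0 1) ∧ γ 0 = x ∧ γ 1 = y ∧ MapsTo γ (Icc 0 1) Ω ∧
    eVariationOn γ (Icc 0 1) ≤ ENNReal.ofReal (dist x y / ε₀) ∧
    ∀ t ∈ Icc (0:ℝ) 1,
      ε₀ * (dist x (γ t) * dist y (γ t)) / dist x y ≤ infDist (γ t) (frontier Ω)

/-- `Ω` is a uniform domain. -/
def IsUniformDomain {n : ℕ} (Ω : Set (Euc n)) : Prop :=
  ∃ ε₀ : ℝ, 0 < ε₀ ∧ ε₀ ≤ 1 ∧ IsUniformWith Ω ε₀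

/-- `Ω` is an `α`-cigar domain: any two points can be joined by a rectifiable
(arclength-parametrized) curve in `Ω` along which
`∫_γ dist(z, ∂Ω)^(α-1) |dz| ≤ C |x - y|^α`. -/
def IsCigarDomain {n : ℕ} (Ω : Set (Euc n)) (α : ℝ) : Prop :=
  ∃ C : ℝ, 0 < C ∧ ∀ x ∈ Ω, ∀ y ∈ Ω, ∃ L : ℝ, 0 ≤ L ∧ ∃ γ : ℝ → Euc n,
    γ 0 = x ∧ γ L = y ∧ MapsTo γ (Icc 0 L) Ω ∧ ArclengthOn γ L ∧
    (∫⁻ t in Icc (0:ℝ) L, ENNReal.ofReal (infDist (γ t) (frontier Ω) ^ (α - 1)) ∂volume)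
      ≤ ENNReal.ofReal (C * dist x y ^ α)

/-- `Ω` is a `c₀`-John domain. -/
def IsJohnDomain {n : ℕ} (Ω : Set (Euc n)) (c₀ : ℝ) : Prop :=
  ∃ x₀ ∈ Ω, ∀ x ∈ Ω, ∃ l : ℝ, 0 ≤ l ∧ ∃ γ : ℝ → Euc n,
    γ 0 = x ∧ γ l = x₀ ∧ MapsTo γ (Icc 0 l) Ω ∧ ArclengthOn γ l ∧
    ∀ t ∈ Icc (0:ℝ) l, c₀ * t ≤ infDist (γ t) (frontier Ω)

/-- `Ω` has the `C`-slice property with respect to `x₀`. -/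
def HasSliceProperty {n : ℕ} (Ω : Set (Euc n)) (C : ℝ) (x₀ : Euc n) : Prop :=
  ∀ x ∈ Ω, ∃ γ : ℝ → Euc n,
    ContinuousOn γ (Icc 0 1) ∧ γ 0 = x₀ ∧ γ 1 = x ∧ MapsTo γ (Icc 0 1) Ω ∧
    ∃ j : ℕ, ∃ U : Fin (j + 1) → Set (Euc n),
      (∀ i, IsOpen (U i) ∧ U i ⊆ Ω) ∧
      (Pairwise fun i₁ i₂ => Disjoint (U i₁) (U i₂)) ∧
      -- (1)
      x₀ ∈ U 0 ∧ x ∈ U (Fin.last j) ∧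
      (∀ i : Fin (j + 1), 0 < (i : ℕ) → (i : ℕ) < j →
        x₀ ∈ Ω \ closure (U i) ∧ x ∈ Ω \ closure (U i) ∧
        x ∉ connectedComponentIn (Ω \ closure (U i)) x₀) ∧
      -- (2)
      (∀ i : Fin (j + 1), 0 < (i : ℕ) → (i : ℕ) < j →
        ∀ γ' : ℝ → Euc n, ContinuousOn γ' (Icc 0 1) → MapsTo γ' (Icc 0 1) Ω →
          (∃ t ∈ Icc (0:ℝ) 1, γ' t = x) → (∃ t ∈ Icc (0:ℝ) 1, γ' t = x₀) →
          ENNReal.ofReal (diam (U i)) ≤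
            ENNReal.ofReal C * eVariationOn γ' {t ∈ Icc (0:ℝ) 1 | γ' t ∈ U i}) ∧
      -- (3)
      (∀ t ∈ Icc (0:ℝ) 1,
        ball (γ t) (infDist (γ t) (frontier Ω) / C) ⊆ ⋃ i, closure (U i)) ∧
      -- (4)
      (∀ i : Fin (j + 1), ∀ t ∈ Icc (0:ℝ) 1, γ t ∈ U i →
        diam (U i) ≤ C * infDist (γ t) (frontier Ω)) ∧
      (∀ i : Fin (j + 1), ∃ xi ∈ U i, (∃ t ∈ Icc (0:ℝ) 1, γ t = xi) ∧
        ((i : ℕ) = j → xi = x) ∧ ball xi (infDist xi (frontier Ω) / C) ⊆ U i)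

/-- `Ω` satisfies the slice condition. -/
def SliceCondition {n : ℕ} (Ω : Set (Euc n)) : Prop :=
  ∃ C : ℝ, 1 < C ∧ ∀ x₀ ∈ Ω, HasSliceProperty Ω C x₀

/-- `Ω` is LLC. -/
def IsLLC {n : ℕ} (Ω : Set (Euc n)) : Prop :=
  ∃ b : ℝ, 0 < b ∧ b ≤ 1 ∧ ∀ z : Euc n, ∀ r : ℝ, 0 < r →
    (∀ x ∈ Ω ∩ ball z r, ∀ y ∈ Ω ∩ ball z r, JoinedByCurveIn (Ω ∩ ball z (r / b)) x y) ∧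
    (∀ x ∈ Ω \ ball z r, ∀ y ∈ Ω \ ball z r, JoinedByCurveIn (Ω \ ball z (b * r)) x y)

/-- `Ω` is quasiconvex. -/
def IsQuasiconvex {n : ℕ} (Ω : Set (Euc n)) : Prop :=
  ∃ C : ℝ, 1 ≤ C ∧ ∀ x ∈ Ω, ∀ y ∈ Ω, ∃ γ : ℝ → Euc n,
    ContinuousOn γ (Icc 0 1) ∧ γ 0 = x ∧ γ 1 = y ∧ MapsTo γ (Icc 0 1) Ω ∧
    eVariationOn γ (Icc 0 1) ≤ ENNReal.ofReal (C * dist x y)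

/-- The intrinsic (inner) metric of `Ω` (`∞` if there is no rectifiable curve). -/
def intrinsicDist {n : ℕ} (Ω : Set (Euc n)) (x y : Euc n) : ℝ≥0∞ :=
  ⨅ (γ : ℝ → Euc n)
    (_ : ContinuousOn γ (Icc 0 1) ∧ γ 0 = x ∧ γ 1 = y ∧ MapsTo γ (Icc 0 1) Ω),
    eVariationOn γ (Icc 0 1)

/-- The intrinsic ball `B_Ω(x, r)`. -/
def intrinsicBall {n : ℕ} (Ω : Set (Euc n)) (x : Euc n) (r : ℝ) : Set (Euc n) :=
  {y ∈ Ω | intrinsicDist Ω x y < ENNReal.ofReal r}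

/-- `Ω` is intrinsic Ahlfors `n`-regular. -/
def IntrinsicAhlforsRegular {n : ℕ} (Ω : Set (Euc n)) : Prop :=
  ∃ c : ℝ, 0 < c ∧ c < 1 ∧ ∃ r₀ : ℝ, 0 < r₀ ∧ ∀ x ∈ Ω, ∀ r : ℝ, 0 < r → r < r₀ →
    ENNReal.ofReal c * volume (ball x r) ≤ volume (intrinsicBall Ω x r)

/-- `Ω` is a local Sobolev–Poincaré imbedding domain of order `p`, `1 ≤ p < n`. -/
def LocalSPLow (n : ℕ) (Ω : Set (Euc n)) (p : ℝ) : Prop :=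
  ∃ C : ℝ, 1 ≤ C ∧ ∃ lam : ℝ, 1 ≤ lam ∧
    ∀ u : Euc n → ℝ, LocallyLipschitzOnSet u Ω →
      ∀ x ∈ Ω, ∀ r : ℝ, 0 < r → r < diam Ω →
        (⨅ c : ℝ, (∫⁻ y in ball x r ∩ Ω,
            ENNReal.ofReal |u y - c| ^ ((n : ℝ) * p / ((n : ℝ) - p)) ∂volume)
              ^ (((n : ℝ) - p) / ((n : ℝ) * p)))
          ≤ ENNReal.ofReal C *
            (∫⁻ y in ball x (lam * r) ∩ Ω,
              ENNReal.ofReal ‖fderiv ℝ u y‖ ^ p ∂volume) ^ (1 / p)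

/-- `Ω` is a local Sobolev–Poincaré imbedding domain of order `n`
(local Trudinger inequality). -/
def LocalSPn (n : ℕ) (Ω : Set (Euc n)) : Prop :=
  ∃ C : ℝ, 1 ≤ C ∧ ∃ lam : ℝ, 1 ≤ lam ∧ ∃ A : ℝ, 0 < A ∧
    ∀ u : Euc n → ℝ, LocallyLipschitzOnSet u Ω →
      ∀ x ∈ Ω, ∀ r : ℝ, 0 < r → r < diam Ω →
        0 < (∫⁻ y in ball x (lam * r) ∩ Ω,
              ENNReal.ofReal ‖fderiv ℝ u y‖ ^ (n : ℝ) ∂volume) →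
        (∫⁻ y in ball x (lam * r) ∩ Ω,
              ENNReal.ofReal ‖fderiv ℝ u y‖ ^ (n : ℝ) ∂volume) < ⊤ →
        (⨅ c : ℝ, ∫⁻ y in ball x r ∩ Ω,
            ENNReal.ofReal (Real.exp ((A * |u y - c| /
              (∫⁻ z in ball x (lam * r) ∩ Ω,
                ENNReal.ofReal ‖fderiv ℝ u z‖ ^ (n : ℝ) ∂volume).toReal
                  ^ ((1 : ℝ) / (n : ℝ))) ^ ((n : ℝ) / ((n : ℝ) - 1)))) ∂volume)
          ≤ ENNReal.ofReal C * volume (ball x r)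

/-- `Ω` is a local Sobolev–Poincaré imbedding domain of order `p`, `n < p < ∞`
(local Morrey inequality). -/
def LocalSPHigh (n : ℕ) (Ω : Set (Euc n)) (p : ℝ) : Prop :=
  ∃ C : ℝ, 1 ≤ C ∧ ∃ lam : ℝ, 1 ≤ lam ∧
    ∀ u : Euc n → ℝ, LocallyLipschitzOnSet u Ω →
      ∀ x ∈ Ω, ∀ r : ℝ, 0 < r → r < diam Ω →
        ∀ x₁ ∈ ball x r ∩ Ω, ∀ x₂ ∈ ball x r ∩ Ω,
          ENNReal.ofReal |u x₁ - u x₂| ≤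
            ENNReal.ofReal (C * dist x₁ x₂ ^ (1 - (n : ℝ) / p)) *
              (∫⁻ y in ball x (lam * r) ∩ Ω,
                ENNReal.ofReal ‖fderiv ℝ u y‖ ^ p ∂volume) ^ (1 / p)

/-- `Ω` is a `p`-Poincaré domain. -/
def PoincareDomain (n : ℕ) (Ω : Set (Euc n)) (p : ℝ) : Prop :=
  ∃ C : ℝ, 1 ≤ C ∧ ∃ lam : ℝ, 1 ≤ lam ∧
    ∀ u : Euc n → ℝ, LocallyLipschitzOnSet u Ω →
      ∀ x ∈ Ω, ∀ r : ℝ, 0 < r → r < diam Ω →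
        (volume (ball x r ∩ Ω))⁻¹ *
          (∫⁻ y in ball x r ∩ Ω,
            ENNReal.ofReal |u y - ⨍ z in ball x r ∩ Ω, u z ∂volume| ∂volume)
          ≤ ENNReal.ofReal (C * r) *
            ((volume (ball x (lam * r) ∩ Ω))⁻¹ *
              ∫⁻ y in ball x (lam * r) ∩ Ω,
                ENNReal.ofReal ‖fderiv ℝ u y‖ ^ p ∂volume) ^ (1 / p)


/-!
Two distinct points of a bounded open set are strictly closer than its diameter, so both lie
in a ball `B(x₁, r)` with `r < diam Ω`; the local Morrey inequality on that ball, with the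
integral over `B(x₁, λr) ∩ Ω` enlarged to `Ω`, is the global one with `C' = C`.
-/

theorem dist_lt_diam_of_isOpen {E : Type*} [NormedAddCommGroup E] [NormedSpace ℝ E]
    {s : Set E} (hs : IsOpen s) (hb : Bornology.IsBounded s) {x y : E} (hx : x ∈ s)
    (hy : y ∈ s) (hxy : x ≠ y) : dist x y < diam s := by
  have hline : Filter.Tendsto (AffineMap.lineMap x y : ℝ → E) (nhdsWithin 1 (Ioi 1))
      (nhds y) := by
    simpa only [AffineMap.lineMap_apply_one] using
      ((AffineMap.lineMap_continuous (R := ℝ) (p := x) (q := y)).tendsto 1).mono_left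
        nhdsWithin_le_nhds
  obtain ⟨c, hcs, hc⟩ := ((hline.eventually (hs.mem_nhds hy)).and self_mem_nhdsWithin).exists
  calc dist x y < c * dist x y := lt_mul_of_one_lt_left (dist_pos.2 hxy) hc
    _ = dist x (AffineMap.lineMap x y c) := by
      rw [dist_left_lineMap, Real.norm_of_nonneg (zero_le_one.trans hc.le)]
    _ ≤ diam s := dist_le_diam_of_mem hb hx hcs

theorem stmt6_general (n : ℕ) (p : ℝ) (hpn : (n : ℝ) < p)
    (Ω : Set (Euc n)) (hOpen : IsOpen Ω)
    (hBdd : Bornology.IsBounded Ω)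
    (hSP : LocalSPHigh n Ω p) :
    ∃ C' : ℝ, ∀ u : Euc n → ℝ, LocallyLipschitzOnSet u Ω →
      ∀ x₁ ∈ Ω, ∀ x₂ ∈ Ω,
        ENNReal.ofReal |u x₁ - u x₂| ≤
          ENNReal.ofReal (C' * dist x₁ x₂ ^ (1 - (n : ℝ) / p)) *
            (∫⁻ y in Ω, ENNReal.ofReal ‖fderiv ℝ u y‖ ^ p ∂volume) ^ (1 / p) := by
  obtain ⟨C, -, lam, -, hlocal⟩ := hSP
  refine ⟨C, fun u hu x₁ hx₁ x₂ hx₂ => ?_⟩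
  rcases eq_or_ne x₁ x₂ with rfl | hne
  · simp
  obtain ⟨r, hdr, hr⟩ := exists_between (dist_lt_diam_of_isOpen hOpen hBdd hx₁ hx₂ hne)
  have hr0 : 0 < r := (dist_pos.2 hne).trans hdr
  have hx₂r : x₂ ∈ ball x₁ r := by rwa [mem_ball, dist_comm]
  have hp : 0 ≤ 1 / p := one_div_nonneg.2 (n.cast_nonneg.trans hpn.le)
  refine (hlocal u hu x₁ hx₁ r hr0 hr x₁ ⟨mem_ball_self hr0, hx₁⟩ x₂ ⟨hx₂r, hx₂⟩).trans ?_
  gcongr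
  exact inter_subset_right

/-- a bounded local Sobolev–Poincaré imbedding domain of order
`p`, `n < p < ∞`, satisfies the global Morrey inequality. -/
theorem stmt6 (n : ℕ) (hn : 2 ≤ n) (p : ℝ) (hpn : (n : ℝ) < p)
    (Ω : Set (Euc n)) (hOpen : IsOpen Ω)
    (hConn : IsConnected Ω) (hBdd : Bornology.IsBounded Ω)
    (hSP : LocalSPHigh n Ω p) :
    ∃ C' : ℝ, ∀ u : Euc n → ℝ, LocallyLipschitzOnSet u Ω →
      ∀ x₁ ∈ Ω, ∀ x₂ ∈ Ω,
        ENNReal.ofReal |u x₁ - u x₂| ≤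
          ENNReal.ofReal (C' * dist x₁ x₂ ^ (1 - (n : ℝ) / p)) *
            (∫⁻ y in Ω, ENNReal.ofReal ‖fderiv ℝ u y‖ ^ p ∂volume) ^ (1 / p) :=
  stmt6_general n p hpn Ω hOpen hBdd hSP
end
end

section
/- Let n ≥ 2 and 1 ≤ p < n, and let Ω ⊂ ℝⁿ be a bounded domain which is a local Sobolev–Poincaré imbedding domain of order p, i.e. there exist constants C ≥ 1 and λ ≥ 1 such that for every locally Lipschitz function u : Ω → ℝ, every x ∈ Ω and every 0 < r < diam(Ω), inf_{c∈ℝ} (∫_{B(x,r)∩Ω} |u(y) − c|^{np/(n−p)} dy)^{(n−p)/(np)} ≤ C (∫_{B(x,λr)∩Ω} |∇u(y)|^p dy)^{1/p}. Then Ω is intrinsic Ahlfors n-regular. -/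
/-!
Fix `x ∈ Ω` and test the Sobolev–Poincaré inequality with the truncated intrinsic distance
`u = min (d_Ω(x, ·), 3s)`. It is 1-Lipschitz on `Ω` and its gradient vanishes off
`B_Ω(x, 3s)`, so the right-hand side is at most `C |B_Ω(x, 4s)|^(1/p)`. If some `ρ < diam Ω`
has `|B(x, ρ) ∩ Ω \ B_Ω(x, 3s)| ≥ |B_Ω(x, s)|`, then for every constant `c` the function
`|u - c|` is `≥ s` on a set of measure `≥ |B_Ω(x, s)|`, and the inequality at radius `ρ` gives
`s^p |B_Ω(x, s)|^((n-p)/n) ≤ C^p |B_Ω(x, 4s)|`. Otherwise, letting `ρ → diam Ω`, all of `Ω`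
except a set of measure `|B_Ω(x, s)|` lies in `B_Ω(x, 3s)`, so `|B_Ω(x, 4s)| ≥ |Ω| / 2`.

At small scales `B_Ω(x, t) ⊇ B(x, t)`. The exponent `(n-p)/n` is exactly the one for which
`s^p (c sⁿ)^((n-p)/n) ≥ C^p c (4s)ⁿ` once `c` is small, so the bound `|B_Ω(x, t)| ≥ c tⁿ`
propagates from scale `t/4` to scale `t` up to `t = diam Ω / 2`, with `c` independent of `x`.
-/

open Set Metric MeasureTheory ENNReal NNReal

noncomputable section

theorem exists_concat_curve {E : Type*} [PseudoEMetricSpace E] {S : Set E} {γ δ : ℝ → E}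
    (hγ : ContinuousOn γ (Icc 0 1)) (hδ : ContinuousOn δ (Icc 0 1))
    (hγS : MapsTo γ (Icc 0 1) S) (hδS : MapsTo δ (Icc 0 1) S) (hγδ : γ 1 = δ 0) :
    ∃ η : ℝ → E, ContinuousOn η (Icc 0 1) ∧ η 0 = γ 0 ∧ η 1 = δ 1 ∧ MapsTo η (Icc 0 1) S ∧
      eVariationOn η (Icc 0 1) = eVariationOn γ (Icc 0 1) + eVariationOn δ (Icc 0 1) := by
  set η : ℝ → E := fun τ => if τ ≤ 1 / 2 then γ (2 * τ) else δ (2 * τ - 1)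
  have hφ : MapsTo (fun τ : ℝ => 2 * τ) (Icc 0 (1 / 2)) (Icc 0 1) :=
    fun τ hτ => ⟨by linarith [hτ.1], by linarith [hτ.2]⟩
  have hψ : MapsTo (fun τ : ℝ => 2 * τ - 1) (Icc (1 / 2) 1) (Icc 0 1) :=
    fun τ hτ => ⟨by linarith [hτ.1], by linarith [hτ.2]⟩
  have hφim : (fun τ : ℝ => 2 * τ) '' Icc 0 (1 / 2) = Icc 0 1 := by
    rw [image_mul_left_Icc (by norm_num) (by norm_num)]; norm_num
  have hψim : (fun τ : ℝ => 2 * τ - 1) '' Icc (1 / 2) 1 = Icc 0 1 := by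
    simp only [sub_eq_add_neg, image_affine_Icc' (by norm_num : (0 : ℝ) < 2)]; norm_num
  have hfirst : EqOn η (γ ∘ fun τ => 2 * τ) (Icc 0 (1 / 2)) := fun τ hτ => if_pos hτ.2
  have hsecond : EqOn η (δ ∘ fun τ => 2 * τ - 1) (Icc (1 / 2) 1) := by
    intro τ hτ
    rcases hτ.1.eq_or_lt with rfl | hlt
    · simp [η, hγδ]
    · exact if_neg (not_le.2 hlt)
  have hsplit : Icc (0 : ℝ) 1 = Icc 0 (1 / 2) ∪ Icc (1 / 2) 1 :=
    (Icc_union_Icc_eq_Icc (by norm_num) (by norm_num)).symm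
  refine ⟨η, ?_, by simp [η], by norm_num [η], ?_, ?_⟩
  · rw [hsplit]
    exact ((hγ.comp (by fun_prop) hφ).congr hfirst).union_of_isClosed
      ((hδ.comp (by fun_prop) hψ).congr hsecond) isClosed_Icc isClosed_Icc
  · rw [hsplit]
    rintro τ (hτ | hτ)
    · rw [hfirst hτ]; exact hγS (hφ hτ)
    · rw [hsecond hτ]; exact hδS (hψ hτ)
  · have hadd := eVariationOn.Icc_add_Icc η (s := univ) (a := 0) (b := 1 / 2) (c := 1)
      (by norm_num) (by norm_num) (mem_univ _)
    simp only [univ_inter] at hadd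
    rw [← hadd, eVariationOn.eq_of_eqOn hfirst, eVariationOn.eq_of_eqOn hsecond,
      eVariationOn.comp_eq_of_monotoneOn _ _ (fun a _ b _ hab => by linarith),
      eVariationOn.comp_eq_of_monotoneOn _ _ (fun a _ b _ hab => by linarith), hφim, hψim]

section IntrinsicDist

variable {n : ℕ} {Ω : Set (Euc n)} {x y z w : Euc n} {ε : ℝ}

theorem edist_le_intrinsicDist : edist x y ≤ intrinsicDist Ω x y :=
  le_iInf₂ fun γ ⟨_, hγ0, hγ1, _⟩ => by
    rw [← hγ0, ← hγ1]
    exact eVariationOn.edist_le γ (left_mem_Icc.2 zero_le_one) (right_mem_Icc.2 zero_le_one)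

theorem intrinsicDist_le_edist_of_segment_subset (h : segment ℝ x y ⊆ Ω) :
    intrinsicDist Ω x y ≤ edist x y := by
  have hmaps : MapsTo (AffineMap.lineMap x y : ℝ → Euc n) (Icc 0 1) Ω := by
    intro τ hτ
    exact h (segment_eq_image_lineMap ℝ x y ▸ mem_image_of_mem _ hτ)
  refine iInf₂_le_of_le _ ⟨(AffineMap.lineMap_continuous).continuousOn,
    AffineMap.lineMap_apply_zero x y, AffineMap.lineMap_apply_one x y, hmaps⟩ ?_
  calc eVariationOn (AffineMap.lineMap x y ∘ id) (Icc (0 : ℝ) 1)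
      ≤ nndist x y * eVariationOn (id : ℝ → ℝ) (Icc 0 1) :=
        (lipschitzWith_lineMap x y).lipschitzOnWith.comp_eVariationOn_le (mapsTo_univ _ _)
    _ ≤ nndist x y * 1 := by gcongr; simp
    _ = edist x y := by rw [mul_one, edist_nndist]

theorem intrinsicDist_triangle : intrinsicDist Ω x z ≤ intrinsicDist Ω x y + intrinsicDist Ω y z :=
  ENNReal.le_iInf₂_add_iInf₂ fun γ ⟨hγ, hγ0, hγ1, hγΩ⟩ δ ⟨hδ, hδ0, hδ1, hδΩ⟩ => by
    obtain ⟨η, hη, hη0, hη1, hηΩ, hvar⟩ :=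
      exists_concat_curve hγ hδ hγΩ hδΩ (hγ1.trans hδ0.symm)
    exact iInf₂_le_of_le η ⟨hη, hη0.trans hγ0, hη1.trans hδ1, hηΩ⟩ hvar.le

theorem intrinsicDist_le_add_edist_of_ball_subset (h : ball w ε ⊆ Ω) (hy : y ∈ ball w ε)
    (hz : z ∈ ball w ε) : intrinsicDist Ω x z ≤ intrinsicDist Ω x y + edist y z :=
  intrinsicDist_triangle.trans <| by
    gcongr
    exact intrinsicDist_le_edist_of_segment_subset (((convex_ball w ε).segment_subset hy hz).trans h)

theorem continuousOn_intrinsicDist (hΩ : IsOpen Ω) : ContinuousOn (intrinsicDist Ω x) Ω := by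
  intro y hy
  obtain ⟨ε, hε, hball⟩ := Metric.isOpen_iff.1 hΩ y hy
  have hcont : Continuous ((ball y ε).domRestrict (intrinsicDist Ω x)) :=
    continuous_of_le_add_edist 1 one_ne_top fun a b => by
      simpa [one_mul, Subtype.edist_eq, edist_comm] using
        intrinsicDist_le_add_edist_of_ball_subset (x := x) hball b.2 a.2
  exact ((continuousOn_iff_continuous_domRestrict.2 hcont).continuousAt
    (ball_mem_nhds y hε)).continuousWithinAt

theorem isOpen_intrinsicBall (hΩ : IsOpen Ω) (r : ℝ) : IsOpen (intrinsicBall Ω x r) :=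
  (continuousOn_intrinsicDist hΩ).isOpen_inter_preimage hΩ isOpen_Iio

theorem intrinsicBall_subset_ball {r : ℝ} : intrinsicBall Ω x r ⊆ ball x r :=
  fun _ hy => mem_ball_comm.1 (edist_lt_ofReal.1 (edist_le_intrinsicDist.trans_lt hy.2))

theorem intrinsicBall_subset_intrinsicBall {r s : ℝ} (h : r ≤ s) :
    intrinsicBall Ω x r ⊆ intrinsicBall Ω x s :=
  fun _ hy => ⟨hy.1, hy.2.trans_le (ofReal_le_ofReal h)⟩

theorem ball_subset_intrinsicBall {r : ℝ} (h : ball x r ⊆ Ω) : ball x r ⊆ intrinsicBall Ω x r :=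
  fun _ hy => ⟨h hy, (intrinsicDist_le_edist_of_segment_subset
    (((convex_ball x r).segment_subset (mem_ball_self (pos_of_mem_ball hy)) hy).trans h)).trans_lt
      (edist_lt_ofReal.2 (mem_ball_comm.1 hy))⟩

end IntrinsicDist

/-- Truncating at `L` keeps the value finite, so taking `toReal` loses nothing. -/
def truncIntrinsicDist {n : ℕ} (Ω : Set (Euc n)) (x : Euc n) (L : ℝ) (y : Euc n) : ℝ :=
  (min (intrinsicDist Ω x y) (ENNReal.ofReal L)).toReal

section TruncIntrinsicDist

variable {n : ℕ} {Ω : Set (Euc n)} {x y : Euc n} {L : ℝ}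

theorem truncIntrinsicDist_eq_of_le (hL : 0 ≤ L) (h : ENNReal.ofReal L ≤ intrinsicDist Ω x y) :
    truncIntrinsicDist Ω x L y = L := by
  rw [truncIntrinsicDist, min_eq_right h, toReal_ofReal hL]

theorem truncIntrinsicDist_le_of_mem_intrinsicBall {r : ℝ} (hr : 0 ≤ r)
    (hy : y ∈ intrinsicBall Ω x r) : truncIntrinsicDist Ω x L y ≤ r :=
  (toReal_mono ofReal_ne_top (min_le_left _ _ |>.trans hy.2.le)).trans_eq (toReal_ofReal hr)

theorem lipschitzOnWith_truncIntrinsicDist {w : Euc n} {ε : ℝ} (h : ball w ε ⊆ Ω) :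
    LipschitzOnWith 1 (truncIntrinsicDist Ω x L) (ball w ε) := by
  refine LipschitzOnWith.of_le_add fun a ha b hb => ?_
  have hmin : min (intrinsicDist Ω x a) (ENNReal.ofReal L) ≤
      min (intrinsicDist Ω x b) (ENNReal.ofReal L) + edist b a :=
    calc min (intrinsicDist Ω x a) (ENNReal.ofReal L)
        ≤ min (intrinsicDist Ω x b + edist b a) (ENNReal.ofReal L + edist b a) :=
          min_le_min (intrinsicDist_le_add_edist_of_ball_subset h hb ha) le_self_add
      _ = _ := min_add_add_right _ _ _
  simpa [truncIntrinsicDist, edist_dist, dist_comm] using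
    toReal_le_add hmin (ne_top_of_le_ne_top ofReal_ne_top (min_le_right _ _)) (edist_ne_top _ _)

theorem locallyLipschitzOnSet_truncIntrinsicDist (hΩ : IsOpen Ω) :
    LocallyLipschitzOnSet (truncIntrinsicDist Ω x L) Ω := fun y hy => by
  obtain ⟨ε, hε, hball⟩ := Metric.isOpen_iff.1 hΩ y hy
  exact ⟨1, ball y ε, mem_nhdsWithin_of_mem_nhds (ball_mem_nhds y hε),
    lipschitzOnWith_truncIntrinsicDist hball⟩

theorem norm_fderiv_truncIntrinsicDist_le_one (hΩ : IsOpen Ω) (hy : y ∈ Ω) :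
    ‖fderiv ℝ (truncIntrinsicDist Ω x L) y‖ ≤ 1 := by
  obtain ⟨ε, hε, hball⟩ := Metric.isOpen_iff.1 hΩ y hy
  simpa using norm_fderiv_le_of_lipschitzOn ℝ (ball_mem_nhds y hε)
    (lipschitzOnWith_truncIntrinsicDist (x := x) (L := L) hball)

theorem fderiv_truncIntrinsicDist_eq_zero (hΩ : IsOpen Ω) (hL : 0 ≤ L) (hy : y ∈ Ω)
    (h : ENNReal.ofReal L < intrinsicDist Ω x y) :
    fderiv ℝ (truncIntrinsicDist Ω x L) y = 0 := by
  have hconst : truncIntrinsicDist Ω x L =ᶠ[nhds y] fun _ => L := by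
    filter_upwards [((continuousOn_intrinsicDist hΩ).continuousAt (hΩ.mem_nhds hy)).eventually
      (lt_mem_nhds h)] with z hz
    exact truncIntrinsicDist_eq_of_le hL hz.le
  rw [hconst.fderiv_eq, fderiv_const_apply]

theorem setLIntegral_norm_fderiv_truncIntrinsicDist_rpow_le (hΩ : IsOpen Ω) {p L t : ℝ}
    (hp : 0 < p) (hL : 0 ≤ L) (hLt : L < t) (S : Set (Euc n)) :
    ∫⁻ y in S ∩ Ω, ENNReal.ofReal ‖fderiv ℝ (truncIntrinsicDist Ω x L) y‖ ^ p ≤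
      volume (intrinsicBall Ω x t) := by
  have hpointwise : ∀ y ∈ Ω, ENNReal.ofReal ‖fderiv ℝ (truncIntrinsicDist Ω x L) y‖ ^ p ≤
      (intrinsicBall Ω x t).indicator 1 y := by
    intro y hy
    by_cases hfar : ENNReal.ofReal L < intrinsicDist Ω x y
    · simp [fderiv_truncIntrinsicDist_eq_zero hΩ hL hy hfar, ENNReal.zero_rpow_of_pos hp]
    · have hyB : y ∈ intrinsicBall Ω x t :=
        ⟨hy, (not_lt.1 hfar).trans_lt ((ENNReal.ofReal_lt_ofReal_iff_of_nonneg hL).2 hLt)⟩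
      rw [indicator_of_mem hyB, Pi.one_apply, ← ENNReal.one_rpow p, ← ofReal_one]
      gcongr
      exact norm_fderiv_truncIntrinsicDist_le_one hΩ hy
  calc ∫⁻ y in S ∩ Ω, ENNReal.ofReal ‖fderiv ℝ (truncIntrinsicDist Ω x L) y‖ ^ p
      ≤ ∫⁻ y in Ω, ENNReal.ofReal ‖fderiv ℝ (truncIntrinsicDist Ω x L) y‖ ^ p :=
        lintegral_mono_set inter_subset_right
    _ ≤ ∫⁻ y in Ω, (intrinsicBall Ω x t).indicator 1 y :=
        setLIntegral_mono' hΩ.measurableSet hpointwise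
    _ ≤ ∫⁻ y, (intrinsicBall Ω x t).indicator 1 y := setLIntegral_le_lintegral _ _
    _ = volume (intrinsicBall Ω x t) :=
        lintegral_indicator_one (isOpen_intrinsicBall hΩ t).measurableSet

/-- The truncated distance is `≤ s` on `B_Ω(x, s)` and `= 3 s` off `B_Ω(x, 3 s)`, so every
constant `c` is at distance `≥ s` from it on one of these two sets. -/
theorem rpow_mul_measure_intrinsicBall_le_lintegral (hΩ : IsOpen Ω) {q s ρ : ℝ} (hq : 0 < q)
    (hs : 0 < s) (hsρ : s ≤ ρ)
    (hfar : volume (intrinsicBall Ω x s) ≤ volume (ball x ρ ∩ (Ω \ intrinsicBall Ω x (3 * s))))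
    (c : ℝ) :
    ENNReal.ofReal s ^ q * volume (intrinsicBall Ω x s) ≤
      ∫⁻ y in ball x ρ ∩ Ω, ENNReal.ofReal |truncIntrinsicDist Ω x (3 * s) y - c| ^ q := by
  have hbound : ∀ S, MeasurableSet S → S ⊆ ball x ρ ∩ Ω →
      (∀ y ∈ S, s ≤ |truncIntrinsicDist Ω x (3 * s) y - c|) →
      ENNReal.ofReal s ^ q * volume S ≤
        ∫⁻ y in ball x ρ ∩ Ω, ENNReal.ofReal |truncIntrinsicDist Ω x (3 * s) y - c| ^ q := by
    intro S hS hSsub hSs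
    calc ENNReal.ofReal s ^ q * volume S
        ≤ (⨅ y ∈ S, ENNReal.ofReal |truncIntrinsicDist Ω x (3 * s) y - c| ^ q) * volume S := by
          gcongr
          exact le_iInf₂ fun y hy => by gcongr; exact hSs y hy
      _ ≤ ∫⁻ y in S, ENNReal.ofReal |truncIntrinsicDist Ω x (3 * s) y - c| ^ q :=
          iInf_mul_le_setLIntegral _ hS
      _ ≤ _ := lintegral_mono_set hSsub
  rcases le_or_gt c (2 * s) with hc | hc
  · refine (mul_le_mul_right hfar _).trans (hbound _ ?_ ?_ fun y hy => ?_)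
    · exact isOpen_ball.measurableSet.inter
        (hΩ.measurableSet.diff (isOpen_intrinsicBall hΩ _).measurableSet)
    · exact inter_subset_inter_right _ sdiff_subset
    · rw [truncIntrinsicDist_eq_of_le (by positivity)
        (not_lt.1 fun h => hy.2.2 ⟨hy.2.1, h⟩), abs_of_nonneg (by linarith)]
      linarith
  · refine hbound _ (isOpen_intrinsicBall hΩ s).measurableSet
      (subset_inter (intrinsicBall_subset_ball.trans (ball_subset_ball hsρ)) (sep_subset _ _))
      fun y hy => ?_
    have := truncIntrinsicDist_le_of_mem_intrinsicBall (L := 3 * s) hs.le hy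
    rw [abs_of_neg (by linarith)]
    linarith

end TruncIntrinsicDist

theorem measure_ball_inter_le_of_forall_lt {α : Type*} [PseudoMetricSpace α] [MeasurableSpace α]
    {μ : Measure α} {x : α} {s : Set α} {d : ℝ} {m : ℝ≥0∞}
    (h : ∀ ρ < d, μ (ball x ρ ∩ s) ≤ m) : μ (ball x d ∩ s) ≤ m := by
  have hmono : Monotone fun ρ : Iio d => ball x ρ ∩ s :=
    fun ρ ρ' hρ => inter_subset_inter_left _ (ball_subset_ball hρ)
  rw [← biUnion_lt_ball, iUnion₂_inter]
  change μ (⋃ ρ ∈ Iio d, ball x ρ ∩ s) ≤ m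
  rw [biUnion_eq_iUnion, hmono.measure_iUnion]
  exact iSup_le fun ρ => h ρ ρ.2

/-- `LocalSPLow n Ω p` with the constants `C` and `λ` fixed. -/
def LocalSPLowWith (n : ℕ) (Ω : Set (Euc n)) (p C lam : ℝ) : Prop :=
  ∀ u : Euc n → ℝ, LocallyLipschitzOnSet u Ω →
    ∀ x ∈ Ω, ∀ r : ℝ, 0 < r → r < diam Ω →
      (⨅ c : ℝ, (∫⁻ y in ball x r ∩ Ω,
          ENNReal.ofReal |u y - c| ^ ((n : ℝ) * p / ((n : ℝ) - p)) ∂volume)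
            ^ (((n : ℝ) - p) / ((n : ℝ) * p)))
        ≤ ENNReal.ofReal C *
          (∫⁻ y in ball x (lam * r) ∩ Ω,
            ENNReal.ofReal ‖fderiv ℝ u y‖ ^ p ∂volume) ^ (1 / p)

section Dichotomy

variable {n : ℕ} {Ω : Set (Euc n)} {x : Euc n} {p C lam s t : ℝ}

theorem rpow_mul_measure_intrinsicBall_le (hΩ : IsOpen Ω) (hp : 0 < p) (hpn : p < n)
    (hSP : LocalSPLowWith n Ω p C lam) (hx : x ∈ Ω) (hs : 0 < s) (hst : 3 * s < t) {ρ : ℝ}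
    (hsρ : s ≤ ρ) (hρ : ρ < diam Ω)
    (hfar : volume (intrinsicBall Ω x s) ≤ volume (ball x ρ ∩ (Ω \ intrinsicBall Ω x (3 * s)))) :
    ENNReal.ofReal s ^ p * volume (intrinsicBall Ω x s) ^ (((n : ℝ) - p) / n) ≤
      ENNReal.ofReal C ^ p * volume (intrinsicBall Ω x t) := by
  set q : ℝ := (n : ℝ) * p / ((n : ℝ) - p)
  set e : ℝ := ((n : ℝ) - p) / ((n : ℝ) * p)
  have hnp : 0 < (n : ℝ) - p := by linarith
  have hn : 0 < (n : ℝ) := by linarith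
  have he : 0 < e := by positivity
  have hqe : q * e = 1 := by simp only [q, e]; field_simp
  have hep : e * p = ((n : ℝ) - p) / n := by simp only [e]; field_simp
  have hsobolev : ENNReal.ofReal s * volume (intrinsicBall Ω x s) ^ e ≤
      ENNReal.ofReal C * volume (intrinsicBall Ω x t) ^ (1 / p) :=
    calc ENNReal.ofReal s * volume (intrinsicBall Ω x s) ^ e
        = (ENNReal.ofReal s ^ q * volume (intrinsicBall Ω x s)) ^ e := by
          rw [ENNReal.mul_rpow_of_nonneg _ _ he.le, ← ENNReal.rpow_mul, hqe, ENNReal.rpow_one]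
      _ ≤ ⨅ c : ℝ, (∫⁻ y in ball x ρ ∩ Ω,
            ENNReal.ofReal |truncIntrinsicDist Ω x (3 * s) y - c| ^ q) ^ e :=
          le_iInf fun c => ENNReal.rpow_le_rpow
            (rpow_mul_measure_intrinsicBall_le_lintegral hΩ (by positivity) hs hsρ hfar c) he.le
      _ ≤ ENNReal.ofReal C * (∫⁻ y in ball x (lam * ρ) ∩ Ω,
            ENNReal.ofReal ‖fderiv ℝ (truncIntrinsicDist Ω x (3 * s)) y‖ ^ p) ^ (1 / p) :=
          hSP _ (locallyLipschitzOnSet_truncIntrinsicDist hΩ) x hx ρ (hs.trans_le hsρ) hρ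
      _ ≤ ENNReal.ofReal C * volume (intrinsicBall Ω x t) ^ (1 / p) := by
          gcongr
          exact setLIntegral_norm_fderiv_truncIntrinsicDist_rpow_le hΩ hp (by positivity) hst _
  have := ENNReal.rpow_le_rpow hsobolev hp.le
  rwa [ENNReal.mul_rpow_of_nonneg _ _ hp.le, ← ENNReal.rpow_mul, hep,
    ENNReal.mul_rpow_of_nonneg _ _ hp.le, ← ENNReal.rpow_mul, one_div_mul_cancel hp.ne',
    ENNReal.rpow_one] at this

theorem measure_le_two_mul_measure_intrinsicBall (hBdd : Bornology.IsBounded Ω) (hx : x ∈ Ω)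
    (hs : 0 < s) (hsd : s < diam Ω) (hst : 3 * s ≤ t)
    (hnear : ∀ ρ, s ≤ ρ → ρ < diam Ω →
      volume (ball x ρ ∩ (Ω \ intrinsicBall Ω x (3 * s))) ≤ volume (intrinsicBall Ω x s)) :
    volume Ω ≤ 2 * volume (intrinsicBall Ω x t) := by
  set d := diam Ω
  have hfar : volume (ball x d ∩ (Ω \ intrinsicBall Ω x (3 * s))) ≤
      volume (intrinsicBall Ω x s) :=
    measure_ball_inter_le_of_forall_lt fun ρ hρ =>
      (measure_mono (inter_subset_inter_left _ (ball_subset_ball (le_max_left ρ s)))).trans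
        (hnear _ (le_max_right ρ s) (max_lt hρ hsd))
  have hcover : Ω ⊆ intrinsicBall Ω x (3 * s) ∪ ball x d ∩ (Ω \ intrinsicBall Ω x (3 * s)) ∪
      sphere x d := by
    intro y hy
    by_cases hyB : y ∈ intrinsicBall Ω x (3 * s)
    · exact Or.inl (Or.inl hyB)
    rcases (dist_le_diam_of_mem hBdd hy hx).lt_or_eq with hlt | heq
    · exact Or.inl (Or.inr ⟨hlt, hy, hyB⟩)
    · exact Or.inr heq
  have hsmall : volume (intrinsicBall Ω x s) ≤ volume (intrinsicBall Ω x t) :=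
    measure_mono (intrinsicBall_subset_intrinsicBall (by linarith))
  calc volume Ω
      ≤ volume (intrinsicBall Ω x (3 * s)) +
          volume (ball x d ∩ (Ω \ intrinsicBall Ω x (3 * s))) + volume (sphere x d) :=
        (measure_mono hcover).trans
          ((measure_union_le _ _).trans (by gcongr; exact measure_union_le _ _))
    _ ≤ volume (intrinsicBall Ω x t) + volume (intrinsicBall Ω x t) + 0 :=
        add_le_add (add_le_add (measure_mono (intrinsicBall_subset_intrinsicBall hst))
          (hfar.trans hsmall)) (Measure.addHaar_sphere_of_ne_zero _ _ (hs.trans hsd).ne').le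
    _ = 2 * volume (intrinsicBall Ω x t) := by ring

end Dichotomy

section ScaleRecursion

variable {N p K c : ℝ}

theorem mul_mul_rpow_le_rpow_mul_rpow (hp : 0 < p) (hpN : p < N) (hK : 0 < K) (hc : 0 < c)
    (hcK : c ≤ (K * 4 ^ N)⁻¹ ^ (N / p)) {s : ℝ} (hs : 0 < s) :
    K * (c * (4 * s) ^ N) ≤ s ^ p * (c * s ^ N) ^ ((N - p) / N) := by
  have hN : N ≠ 0 := by linarith
  have hcK' : K * c ^ (p / N) * 4 ^ N ≤ 1 :=
    calc K * c ^ (p / N) * 4 ^ N ≤ K * ((K * 4 ^ N)⁻¹ ^ (N / p)) ^ (p / N) * 4 ^ N := by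
          gcongr
          exact div_nonneg hp.le (by linarith)
      _ = 1 := by
          rw [← Real.rpow_mul (by positivity), div_mul_div_cancel₀ hp.ne', div_self hN,
            Real.rpow_one]
          field_simp
  have hc_split : c = c ^ (p / N) * c ^ ((N - p) / N) := by
    rw [← Real.rpow_add hc, ← add_div, add_sub_cancel, div_self hN, Real.rpow_one]
  have hs_split : s ^ p * s ^ (N * ((N - p) / N)) = s ^ N := by
    rw [← Real.rpow_add hs, mul_div_cancel₀ _ hN, add_sub_cancel]
  calc K * (c * (4 * s) ^ N)
      = (K * c ^ (p / N) * 4 ^ N) * (c ^ ((N - p) / N) * s ^ N) := by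
        rw [Real.mul_rpow (by norm_num) hs.le]
        nth_rewrite 1 [hc_split]
        ring
    _ ≤ 1 * (c ^ ((N - p) / N) * s ^ N) := by gcongr
    _ = s ^ p * (c * s ^ N) ^ ((N - p) / N) := by
        rw [Real.mul_rpow hc.le (by positivity), ← Real.rpow_mul hs.le, ← hs_split]
        ring

theorem rpow_le_of_forall_rpow_mul_le_or (hp : 0 < p) (hpN : p < N) (hK : 0 < K) (hc : 0 < c)
    {V : ℝ → ℝ} {M r₀ ε : ℝ} (hε : 0 < ε) (hcK : c ≤ (K * 4 ^ N)⁻¹ ^ (N / p))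
    (hcM : c * r₀ ^ N ≤ M) (hbase : ∀ t, 0 < t → t ≤ ε → c * t ^ N ≤ V t)
    (hstep : ∀ t, 0 < t → t ≤ r₀ →
      (t / 4) ^ p * V (t / 4) ^ ((N - p) / N) ≤ K * V t ∨ M ≤ V t) :
    ∀ t, 0 < t → t ≤ r₀ → c * t ^ N ≤ V t := by
  have hscales : ∀ k : ℕ, ∀ t, 0 < t → t ≤ r₀ → t ≤ 4 ^ k * ε → c * t ^ N ≤ V t := by
    intro k
    induction k with
    | zero => exact fun t ht _ htk => hbase t ht (by simpa using htk)
    | succ k ih =>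
      intro t ht htr htk
      by_cases htε : t ≤ ε
      · exact hbase t ht htε
      have hquarter := ih (t / 4) (by positivity) (by linarith) (by rw [pow_succ] at htk; linarith)
      rcases hstep t ht htr with hgood | hlarge
      · refine le_of_mul_le_mul_left ?_ hK
        calc K * (c * t ^ N) = K * (c * (4 * (t / 4)) ^ N) := by rw [mul_div_cancel₀ t four_ne_zero]
          _ ≤ (t / 4) ^ p * (c * (t / 4) ^ N) ^ ((N - p) / N) :=
            mul_mul_rpow_le_rpow_mul_rpow hp hpN hK hc hcK (by positivity)
          _ ≤ (t / 4) ^ p * V (t / 4) ^ ((N - p) / N) := by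
            gcongr
            exact div_nonneg (by linarith) (by linarith)
          _ ≤ K * V t := hgood
      · calc c * t ^ N ≤ c * r₀ ^ N := by gcongr; linarith
          _ ≤ M := hcM
          _ ≤ V t := hlarge
  intro t ht htr
  obtain ⟨k, hk⟩ := pow_unbounded_of_one_lt (t / ε) (by norm_num : (1 : ℝ) < 4)
  exact hscales k t ht htr ((div_lt_iff₀ hε).1 hk).le

end ScaleRecursion

section AhlforsRegular

variable {n : ℕ} {Ω : Set (Euc n)} {p C lam : ℝ}

theorem toReal_volume_ball (x : Euc n) {t : ℝ} (ht : 0 < t) :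
    (volume (ball x t)).toReal = (volume (ball (0 : Euc n) 1)).toReal * t ^ (n : ℝ) := by
  rw [Measure.addHaar_ball_of_pos volume x ht, finrank_euclideanSpace_fin, toReal_mul,
    toReal_ofReal (by positivity), Real.rpow_natCast, mul_comm]

theorem volume_intrinsicBall_ne_top (hBdd : Bornology.IsBounded Ω) (x : Euc n) (t : ℝ) :
    volume (intrinsicBall Ω x t) ≠ ⊤ :=
  ne_top_of_le_ne_top hBdd.measure_lt_top.ne (measure_mono (sep_subset _ _))

theorem rpow_mul_toReal_measure_intrinsicBall_le_or (hΩ : IsOpen Ω)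
    (hBdd : Bornology.IsBounded Ω) (hp : 0 < p) (hpn : p < n) (hC : 0 ≤ C)
    (hSP : LocalSPLowWith n Ω p C lam) {x : Euc n} (hx : x ∈ Ω) {s t : ℝ} (hs : 0 < s)
    (hst : 3 * s < t) (hsd : s < diam Ω) :
    s ^ p * (volume (intrinsicBall Ω x s)).toReal ^ (((n : ℝ) - p) / n) ≤
        C ^ p * (volume (intrinsicBall Ω x t)).toReal ∨
      (volume Ω).toReal / 2 ≤ (volume (intrinsicBall Ω x t)).toReal := by
  have hfin := volume_intrinsicBall_ne_top hBdd x t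
  by_cases hfar : ∃ ρ, s ≤ ρ ∧ ρ < diam Ω ∧
      volume (intrinsicBall Ω x s) ≤ volume (ball x ρ ∩ (Ω \ intrinsicBall Ω x (3 * s)))
  · obtain ⟨ρ, hsρ, hρ, hfar⟩ := hfar
    left
    have := toReal_mono (mul_ne_top (rpow_ne_top_of_nonneg hp.le ofReal_ne_top) hfin)
      (rpow_mul_measure_intrinsicBall_le hΩ hp hpn hSP hx hs hst hsρ hρ hfar)
    rwa [toReal_mul, toReal_mul, ← toReal_rpow, ← toReal_rpow, ← toReal_rpow,
      toReal_ofReal hs.le, toReal_ofReal hC] at this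
  · push Not at hfar
    right
    have := toReal_mono (mul_ne_top ofNat_ne_top hfin)
      (measure_le_two_mul_measure_intrinsicBall hBdd hx hs hsd hst.le
        fun ρ hsρ hρ => (hfar ρ hsρ hρ).le)
    rw [toReal_mul, toReal_ofNat] at this
    linarith

theorem exists_forall_mul_rpow_le_toReal_measure_intrinsicBall (hΩ : IsOpen Ω)
    (hBdd : Bornology.IsBounded Ω) (hne : Ω.Nonempty) (hp : 0 < p) (hpn : p < n) (hC : 0 < C)
    (hSP : LocalSPLowWith n Ω p C lam) :
    ∃ c > 0, ∃ r₀ > 0, ∀ x ∈ Ω, ∀ t, 0 < t → t ≤ r₀ →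
      c * t ^ (n : ℝ) ≤ (volume (intrinsicBall Ω x t)).toReal := by
  have : Nonempty (Fin n) := ⟨⟨0, by exact_mod_cast hp.trans hpn⟩⟩
  obtain ⟨x₀, hx₀⟩ := hne
  have hd : 0 < diam Ω := diam_pos (infinite_of_mem_nhds x₀ (hΩ.mem_nhds hx₀)).nontrivial hBdd
  set r₀ := diam Ω / 2 with hr₀
  set M := (volume Ω).toReal / 2
  set ω := (volume (ball (0 : Euc n) 1)).toReal
  set K := C ^ p
  have hM : 0 < M := half_pos (toReal_pos (hΩ.measure_pos volume ⟨x₀, hx₀⟩).ne'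
    hBdd.measure_lt_top.ne)
  have hω : 0 < ω := toReal_pos (measure_ball_pos _ _ one_pos).ne' measure_ball_lt_top.ne
  have hK : 0 < K := Real.rpow_pos_of_pos hC p
  set c := min ω (min ((K * 4 ^ (n : ℝ))⁻¹ ^ ((n : ℝ) / p)) (M / r₀ ^ (n : ℝ)))
  have hc : 0 < c := lt_min hω (lt_min (by positivity) (by positivity))
  refine ⟨c, hc, r₀, half_pos hd, fun x hx => ?_⟩
  obtain ⟨ε, hε, hball⟩ := Metric.isOpen_iff.1 hΩ x hx
  refine rpow_le_of_forall_rpow_mul_le_or (M := M) hp hpn hK hc hε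
    (min_le_of_right_le (min_le_left _ _)) ?_ (fun t ht htε => ?_) (fun t ht htr => ?_)
  · exact (le_div_iff₀ (by positivity)).1 (min_le_of_right_le (min_le_right _ _))
  · calc c * t ^ (n : ℝ) ≤ ω * t ^ (n : ℝ) := by gcongr; exact min_le_left _ _
      _ = (volume (ball x t)).toReal := (toReal_volume_ball x ht).symm
      _ ≤ (volume (intrinsicBall Ω x t)).toReal :=
          toReal_mono (volume_intrinsicBall_ne_top hBdd x t)
            (measure_mono (ball_subset_intrinsicBall ((ball_subset_ball htε).trans hball)))
  · exact rpow_mul_toReal_measure_intrinsicBall_le_or hΩ hBdd hp hpn hC.le hSP hx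
      (s := t / 4) (by positivity) (by linarith) (by linarith [hr₀ ▸ htr])

end AhlforsRegular

theorem stmt10_general (n : ℕ) (p : ℝ) (hp1 : 1 ≤ p) (hpn : p < n)
    (Ω : Set (Euc n)) (hOpen : IsOpen Ω)
    (hBdd : Bornology.IsBounded Ω)
    (hSP : LocalSPLow n Ω p) :
    IntrinsicAhlforsRegular Ω := by
  obtain ⟨C, hC, lam, -, hSP⟩ := hSP
  rcases Ω.eq_empty_or_nonempty with rfl | hne
  · exact ⟨1 / 2, by norm_num, by norm_num, 1, one_pos, fun x hx => absurd hx (notMem_empty x)⟩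
  obtain ⟨c, hc, r₀, hr₀, hgrowth⟩ := exists_forall_mul_rpow_le_toReal_measure_intrinsicBall
    hOpen hBdd hne (by linarith) hpn (by linarith) hSP
  set ω := (volume (ball (0 : Euc n) 1)).toReal
  have hω : 0 < ω := toReal_pos (measure_ball_pos _ _ one_pos).ne' measure_ball_lt_top.ne
  refine ⟨min (1 / 2) (c / ω), lt_min (by norm_num) (div_pos hc hω),
    (min_le_left _ _).trans_lt (by norm_num), r₀, hr₀, fun x hx r hr hrr₀ => ?_⟩
  calc ENNReal.ofReal (min (1 / 2) (c / ω)) * volume (ball x r)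
      ≤ ENNReal.ofReal (c / ω * (volume (ball x r)).toReal) := by
        rw [ENNReal.ofReal_mul (by positivity), ofReal_toReal measure_ball_lt_top.ne]
        gcongr
        exact min_le_right _ _
    _ = ENNReal.ofReal (c * r ^ (n : ℝ)) := by
        rw [toReal_volume_ball x hr, ← mul_assoc, div_mul_cancel₀ c hω.ne']
    _ ≤ volume (intrinsicBall Ω x r) := (ofReal_le_ofReal (hgrowth x hx r hr hrr₀.le)).trans_eq
        (ofReal_toReal (volume_intrinsicBall_ne_top hBdd x r))

/-- a bounded local Sobolev–Poincaré imbedding domain of order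
`p`, `1 ≤ p < n`, is intrinsic Ahlfors `n`-regular. -/
theorem stmt10 (n : ℕ) (hn : 2 ≤ n) (p : ℝ) (hp1 : 1 ≤ p) (hpn : p < n)
    (Ω : Set (Euc n)) (hOpen : IsOpen Ω)
    (hConn : IsConnected Ω) (hBdd : Bornology.IsBounded Ω)
    (hSP : LocalSPLow n Ω p) :
    IntrinsicAhlforsRegular Ω :=
  stmt10_general n p hp1 hpn Ω hOpen hBdd hSP
end
end

section
/- Let n ≥ 2 and n < p < ∞, and let Ω ⊂ ℝⁿ be a bounded domain which is a local Sobolev–Poincaré imbedding domain of order p, i.e. there exist constants C ≥ 1 and λ ≥ 1 such that for every locally Lipschitz function u : Ω → ℝ, every x ∈ Ω, every 0 < r < diam(Ω) and all x₁, x₂ ∈ B(x,r) ∩ Ω, |u(x₁) − u(x₂)| ≤ C |x₁ − x₂|^{1 − n/p} (∫_{B(x,λr)∩Ω} |∇u(y)|^p dy)^{1/p}. Then Ω is a p-Poincaré domain. -/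
open Set Metric MeasureTheory ENNReal NNReal

noncomputable section

/-! On `B = B(x, r) ∩ Ω` the Morrey inequality bounds the oscillation of `u` by
`C (2r)^(1 - n/p) ‖∇u‖_{L^p(B(x, λr) ∩ Ω)}`, and the mean oscillation of `u` on `B` is at most
its oscillation. Since `|B(x, λr) ∩ Ω| ≤ ω_n (λr)^n`, writing the `L^p` norm as
`|B(x, λr) ∩ Ω|^(1/p)` times the `p`-average of `|∇u|` turns the factor `(2r)^(1 - n/p)` into
a constant times `r^(1 - n/p) r^(n/p) = r`. -/

theorem LocallyLipschitzOnSet.continuousOn {n : ℕ} {u : Euc n → ℝ} {Ω : Set (Euc n)}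
    (hu : LocallyLipschitzOnSet u Ω) : ContinuousOn u Ω := fun z hz => by
  obtain ⟨K, s, hs, hK⟩ := hu z hz
  exact (hK.continuousOn.continuousWithinAt (mem_of_mem_nhdsWithin hz hs)).mono_of_mem_nhdsWithin
    hs

section Oscillation

variable {X : Type*} [MeasurableSpace X] {μ : Measure X} {s : Set X} {f : X → ℝ}

theorem integrableOn_of_abs_sub_le {M : ℝ} (hsm : MeasurableSet s) (hs : μ s ≠ ∞)
    (hf : AEStronglyMeasurable f (μ.restrict s)) (hosc : ∀ y ∈ s, ∀ z ∈ s, |f y - f z| ≤ M) :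
    IntegrableOn f s μ := by
  rcases s.eq_empty_or_nonempty with rfl | ⟨z, hz⟩
  · exact integrableOn_empty
  refine .of_bound hs.lt_top hf (M + |f z|) (ae_restrict_of_forall_mem hsm fun y hy => ?_)
  rw [Real.norm_eq_abs]
  linarith [abs_sub_abs_le_abs_sub (f y) (f z), hosc y hy z hz]

theorem abs_sub_setAverage_le {M : ℝ} (hsm : MeasurableSet s) (h0 : μ s ≠ 0) (hs : μ s ≠ ∞)
    (hf : IntegrableOn f s μ) (hosc : ∀ y ∈ s, ∀ z ∈ s, |f y - f z| ≤ M) {y : X} (hy : y ∈ s) :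
    |f y - ⨍ z in s, f z ∂μ| ≤ M := by
  have hmem : (⨍ z in s, f z ∂μ) ∈ closedBall (f y) M :=
    (convex_closedBall _ _).set_average_mem isClosed_closedBall h0 hs
      (ae_restrict_of_forall_mem hsm fun z hz => by
        rw [mem_closedBall, Real.dist_eq, abs_sub_comm]
        exact hosc y hy z hz)
      hf
  rw [abs_sub_comm, ← Real.dist_eq]
  exact hmem

theorem setLAverage_abs_sub_setAverage_le {M : ℝ≥0∞} (hsm : MeasurableSet s) (hs : μ s ≠ ∞)
    (hf : AEStronglyMeasurable f (μ.restrict s))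
    (hosc : ∀ y ∈ s, ∀ z ∈ s, ENNReal.ofReal |f y - f z| ≤ M) :
    (μ s)⁻¹ * ∫⁻ y in s, ENNReal.ofReal |f y - ⨍ z in s, f z ∂μ| ∂μ ≤ M := by
  rcases eq_or_ne M ∞ with rfl | hM
  · exact le_top
  rcases eq_or_ne (μ s) 0 with h0 | h0
  · simp [setLIntegral_measure_zero _ _ h0]
  have hosc' : ∀ y ∈ s, ∀ z ∈ s, |f y - f z| ≤ M.toReal := fun y hy z hz =>
    (ENNReal.ofReal_le_iff_le_toReal hM).1 (hosc y hy z hz)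
  have hfi := integrableOn_of_abs_sub_le hsm hs hf hosc'
  calc (μ s)⁻¹ * ∫⁻ y in s, ENNReal.ofReal |f y - ⨍ z in s, f z ∂μ| ∂μ
      ≤ (μ s)⁻¹ * ∫⁻ _ in s, M ∂μ := by
        refine mul_le_mul_right (setLIntegral_mono' hsm fun y hy => ?_) _
        rw [← ENNReal.ofReal_toReal hM]
        exact ENNReal.ofReal_le_ofReal (abs_sub_setAverage_le hsm h0 hs hfi hosc' hy)
    _ = M := by
        rw [setLIntegral_const, mul_comm, mul_assoc, ENNReal.mul_inv_cancel h0 hs, mul_one]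

end Oscillation

theorem mul_rpow_le_mul_inv_mul_rpow {a V I : ℝ≥0∞} {K p : ℝ} (hp : 0 ≤ p) (hK : 0 < K)
    (h : a * V ^ p ≤ ENNReal.ofReal K) : a * I ^ p ≤ ENNReal.ofReal K * (V⁻¹ * I) ^ p := by
  have ha : a ≤ ENNReal.ofReal K / V ^ p :=
    (ENNReal.le_div_iff_mul_le (.inr (ENNReal.ofReal_pos.2 hK).ne')
      (.inr ENNReal.ofReal_ne_top)).2 h
  calc a * I ^ p ≤ ENNReal.ofReal K / V ^ p * I ^ p := by gcongr
    _ = ENNReal.ofReal K * (V⁻¹ * I) ^ p := by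
        rw [ENNReal.mul_rpow_of_nonneg _ _ hp, ENNReal.inv_rpow, div_eq_mul_inv, mul_assoc]

theorem mul_rpow_one_sub_div_mul_mul_pow_rpow_one_div (n : ℕ) {p a b r : ℝ}
    (ha : 0 ≤ a) (hb : 0 ≤ b) (hr : 0 < r) :
    (a * r) ^ (1 - n / p) * (b * r ^ n) ^ (1 / p) = a ^ (1 - n / p) * b ^ (1 / p) * r := by
  have hrn : (r ^ n) ^ (1 / p) = r ^ (n / p) := by
    rw [← Real.rpow_natCast, ← Real.rpow_mul hr.le, mul_one_div]
  rw [Real.mul_rpow ha hr.le, Real.mul_rpow hb (by positivity), hrn]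
  calc a ^ (1 - n / p) * r ^ (1 - n / p) * (b ^ (1 / p) * r ^ (n / p))
      = a ^ (1 - n / p) * b ^ (1 / p) * (r ^ (1 - n / p) * r ^ (n / p)) := by ring
    _ = a ^ (1 - n / p) * b ^ (1 / p) * r := by
        rw [← Real.rpow_add hr, sub_add_cancel, Real.rpow_one]

theorem volume_ball_inter_le {n : ℕ} (Ω : Set (Euc n)) (x : Euc n) {R : ℝ} (hR : 0 < R) :
    volume (ball x R ∩ Ω) ≤ ENNReal.ofReal (R ^ n * volume.real (ball (0 : Euc n) 1)) := by
  calc volume (ball x R ∩ Ω) ≤ volume (ball x R) := measure_mono inter_subset_left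
    _ = ENNReal.ofReal (R ^ n * volume.real (ball (0 : Euc n) 1)) := by
        rw [Measure.addHaar_ball_of_pos _ _ hR, finrank_euclideanSpace_fin,
          ENNReal.ofReal_mul (by positivity), measureReal_def,
          ENNReal.ofReal_toReal measure_ball_lt_top.ne]

theorem ofReal_mul_rpow_mul_volume_ball_inter_rpow_le {n : ℕ} (Ω : Set (Euc n)) (x : Euc n)
    {p C lam r : ℝ} (hp : 0 < p) (hC : 0 ≤ C) (hlam : 0 < lam) (hr : 0 < r) :
    ENNReal.ofReal (C * (2 * r) ^ (1 - n / p)) * volume (ball x (lam * r) ∩ Ω) ^ (1 / p) ≤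
      ENNReal.ofReal
        (C * 2 ^ (1 - n / p) * (lam ^ n * volume.real (ball (0 : Euc n) 1)) ^ (1 / p) * r) := by
  set ω := volume.real (ball (0 : Euc n) 1)
  have hω : 0 ≤ ω := measureReal_nonneg
  calc ENNReal.ofReal (C * (2 * r) ^ (1 - n / p)) * volume (ball x (lam * r) ∩ Ω) ^ (1 / p)
      ≤ ENNReal.ofReal (C * (2 * r) ^ (1 - n / p)) *
          ENNReal.ofReal ((lam * r) ^ n * ω) ^ (1 / p) := by
        gcongr
        exact volume_ball_inter_le Ω x (by positivity)
    _ = ENNReal.ofReal (C * ((2 * r) ^ (1 - n / p) * ((lam ^ n * ω) * r ^ n) ^ (1 / p))) := by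
        rw [ENNReal.ofReal_rpow_of_nonneg (by positivity) (by positivity),
          ← ENNReal.ofReal_mul (by positivity), mul_pow]
        ring_nf
    _ = _ := by
        rw [mul_rpow_one_sub_div_mul_mul_pow_rpow_one_div n zero_le_two (by positivity) hr]
        ring_nf

theorem stmt15_general (n : ℕ) (p : ℝ) (hpn : (n : ℝ) < p)
    (Ω : Set (Euc n)) (hOpen : IsOpen Ω)
    (hSP : LocalSPHigh n Ω p) :
    PoincareDomain n Ω p := by
  obtain ⟨C, hC1, lam, hlam1, hmorrey⟩ := hSP
  have hp : 0 < p := (Nat.cast_nonneg n).trans_lt hpn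
  have hα : 0 ≤ 1 - n / p := sub_nonneg.2 ((div_le_one hp).2 hpn.le)
  set K := C * 2 ^ (1 - n / p) * (lam ^ n * volume.real (ball (0 : Euc n) 1)) ^ (1 / p)
  refine ⟨max 1 K, le_max_left _ _, lam, hlam1, fun u hu x hx r hr hrd => ?_⟩
  set I := ∫⁻ y in ball x (lam * r) ∩ Ω, ENNReal.ofReal ‖fderiv ℝ u y‖ ^ p ∂volume
  have hosc : ∀ y ∈ ball x r ∩ Ω, ∀ z ∈ ball x r ∩ Ω,
      ENNReal.ofReal |u y - u z| ≤ ENNReal.ofReal (C * (2 * r) ^ (1 - n / p)) * I ^ (1 / p) :=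
    fun y hy z hz => (hmorrey u hu x hx r hr hrd y hy z hz).trans <| by
      have hyz : dist y z ≤ 2 * r :=
        (dist_triangle_right y z x).trans (by linarith [mem_ball.1 hy.1, mem_ball.1 hz.1])
      gcongr
  have hB : MeasurableSet (ball x r ∩ Ω) := (isOpen_ball.inter hOpen).measurableSet
  calc _ ≤ ENNReal.ofReal (C * (2 * r) ^ (1 - n / p)) * I ^ (1 / p) :=
        setLAverage_abs_sub_setAverage_le hB
          (measure_inter_lt_top_of_left_ne_top measure_ball_lt_top.ne).ne
          ((hu.continuousOn.mono inter_subset_right).aestronglyMeasurable hB) hosc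
    _ ≤ _ := by
        refine mul_rpow_le_mul_inv_mul_rpow (by positivity) (by positivity) ?_
        refine (ofReal_mul_rpow_mul_volume_ball_inter_rpow_le Ω x hp
          (by linarith) (by linarith) hr).trans ?_
        gcongr
        exact le_max_right _ _

/-- a bounded local Sobolev–Poincaré imbedding domain of order
`p`, `n < p < ∞`, is a `p`-Poincaré domain. -/
theorem stmt15 (n : ℕ) (hn : 2 ≤ n) (p : ℝ) (hpn : (n : ℝ) < p)
    (Ω : Set (Euc n)) (hOpen : IsOpen Ω)
    (hConn : IsConnected Ω) (hBdd : Bornology.IsBounded Ω)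
    (hSP : LocalSPHigh n Ω p) :
    PoincareDomain n Ω p :=
  stmt15_general n p hpn Ω hOpen hSP
end
end
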